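/- arXiv:2510.06345 — 4 statements merged into one kernel-verified Lean document; each statement's English description precedes it below -/
import Mathlib

section
/- Let G be a group, H a subgroup of G, and φ : N_G(H) → N_G(H) a group endomorphism with φ(H) ⊆ H, and assume that for all y ∈ N_G(H) and h ∈ H there exists y₁ ∈ H with y·h = y₁⁻¹·y·φ(y₁). Then two elements y, y' ∈ N_G(H) lie in the same twisted-conjugacy class (under y ↦ y₁⁻¹·y·φ(y₁), y₁ ∈ N_G(H)) if and only if their images in N_G(H)/H lie in the same induced twisted-conjugacy class. -/
/-- the natural surjection from twisted conjugacy classes of `N`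
to twisted conjugacy classes of `N/H` is injective, given that each coset `y·H`
lies in the `H`-twisted conjugacy orbit of `y`. -/
theorem twisted_classes_quotient_injective {N : Type*} [Group N] (H : Subgroup N) [H.Normal]
    (φ : N →* N) (hφ : ∀ h ∈ H, φ h ∈ H)
    (hyp : ∀ (y : N), ∀ h ∈ H, ∃ y₁ ∈ H, y * h = y₁⁻¹ * y * φ y₁)
    (y y' : N) :
    (∃ y₁ : N, y' = y₁⁻¹ * y * φ y₁) ↔
      (∃ y₁ : N, (QuotientGroup.mk y' : N ⧸ H) = QuotientGroup.mk (y₁⁻¹ * y * φ y₁)) := by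
  constructor
  · rintro ⟨y₁, rfl⟩; exact ⟨y₁, rfl⟩
  · rintro ⟨y₁, hq⟩
    rw [QuotientGroup.eq] at hq
    set z := y₁⁻¹ * y * φ y₁ with hzdef
    have hmem : z⁻¹ * y' ∈ H := by
      have := H.inv_mem hq
      simpa [mul_assoc] using this
    obtain ⟨y₂, hy₂, hz⟩ := hyp z (z⁻¹ * y') hmem
    have hy' : y' = y₂⁻¹ * z * φ y₂ := by
      rw [← hz]; group
    refine ⟨y₁ * y₂, ?_⟩
    rw [hy', hzdef, map_mul]
    group
end

section
/- Let N be a group acting on itself by φ-twisted conjugation where φ = id (i.e., ordinary conjugation), let H ⊴ N be normal with the property that for all y ∈ N, h ∈ H there exists y₁ ∈ H with y·h = y₁⁻¹·y·y₁. Then the natural map from conjugacy classes of N to conjugacy classes of N/H is a bijection. -/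
/-- if every coset `y·H` is contained in the `H`-conjugacy orbit of `y`,
then the natural map `cl(N) → cl(N/H)` on conjugacy classes is a bijection. -/
theorem conjClasses_quotient_bijective {N : Type*} [Group N] (H : Subgroup N) [H.Normal]
    (hyp : ∀ (y : N), ∀ h ∈ H, ∃ y₁ ∈ H, y * h = y₁⁻¹ * y * y₁) :
    Function.Bijective (ConjClasses.map (QuotientGroup.mk' H)) := by
  constructor
  · intro a b hab
    obtain ⟨x, rfl⟩ := ConjClasses.mk_surjective a
    obtain ⟨y, rfl⟩ := ConjClasses.mk_surjective b
    have hab : ConjClasses.mk ((QuotientGroup.mk' H) x)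
        = ConjClasses.mk ((QuotientGroup.mk' H) y) := hab
    rw [ConjClasses.mk_eq_mk_iff_isConj] at hab
    obtain ⟨z, hz⟩ := hab
    obtain ⟨w, hw⟩ := QuotientGroup.mk'_surjective H (↑z : N ⧸ H)
    have hz' : (QuotientGroup.mk' H) (w * x * w⁻¹) = (QuotientGroup.mk' H) y := by
      have := hz.eq
      simp only [map_mul, map_inv, hw]
      rw [this]
      group
    rw [QuotientGroup.mk'_eq_mk'] at hz'
    obtain ⟨h, hh, heq⟩ := hz'
    obtain ⟨y₁, hy₁, hy₁eq⟩ := hyp (w * x * w⁻¹) h hh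
    rw [ConjClasses.mk_eq_mk_iff_isConj]
    have key : y = y₁⁻¹ * (w * x * w⁻¹) * y₁ := by rw [← hy₁eq, heq]
    refine ⟨⟨(y₁⁻¹ * w : N), (y₁⁻¹ * w)⁻¹, by group, by group⟩, ?_⟩
    show (y₁⁻¹ * w) * x = y * (y₁⁻¹ * w)
    rw [key]; group
  · exact ConjClasses.map_surjective Quotient.mk''_surjective
end

section
/- Let G be a group with subgroups T ≤ H ≤ G satisfying N_G(H) = H·(N_G(T) ∩ N_G(H)). Then the map on conjugacy classes cl((N_G(T)∩N_G(H))/(N_G(T)∩H)) → cl(N_G(H)/H) induced by the obvious homomorphism a : (N_G(T)∩N_G(H))/(N_G(T)∩H) → N_G(H)/H is a bijection. -/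
/-!
The intersection `N_G(T) ∩ H` is exactly the preimage of `H` in `N_G(T) ∩ N_G(H)`, so the
homomorphism `a` is injective, and the decomposition `N_G(H) = H·(N_G(T) ∩ N_G(H))` makes it
surjective. Thus `a` is an isomorphism of groups, and isomorphisms induce bijections on
conjugacy classes.
-/

open Function

theorem ConjClasses.map_bijective {α β : Type*} [Monoid α] [Monoid β] {f : α →* β}
    (hf : Bijective f) : Bijective (ConjClasses.map f) := by
  let e := MulEquiv.ofBijective f hf
  have hinv : LeftInverse (ConjClasses.map e.symm.toMonoidHom) (ConjClasses.map f) := by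
    intro c
    obtain ⟨a, rfl⟩ := ConjClasses.mk_surjective c
    exact congrArg ConjClasses.mk (e.symm_apply_apply a)
  exact ⟨hinv.injective, ConjClasses.map_surjective hf.2⟩

namespace QuotientGroup

variable {G H : Type*} [Group G] [Group H] {N : Subgroup G} [N.Normal] {M : Subgroup H}
  [M.Normal] {f : G →* H}

theorem map_injective_of_comap_le (h : N ≤ M.comap f) (hle : M.comap f ≤ N) :
    Injective (map N M f h) := by
  rw [← MonoidHom.ker_eq_bot_iff, ker_map, eq_bot_iff, Subgroup.map_le_iff_le_comap,
    MonoidHom.comap_bot, ker_mk']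
  exact hle

theorem map_surjective_of_forall_eq_mul (h : N ≤ M.comap f)
    (hdec : ∀ y : H, ∃ m ∈ M, ∃ x : G, y = m * f x) : Surjective (map N M f h) := by
  refine map_surjective_of_surjective (hf := fun q => ?_) (h := h)
  obtain ⟨y, rfl⟩ := mk_surjective q
  obtain ⟨m, hm, x, rfl⟩ := hdec y
  refine ⟨x, QuotientGroup.eq.mpr ?_⟩
  simpa [mul_assoc] using ‹M.Normal›.conj_mem m hm (f x)⁻¹

end QuotientGroup

/-- paper 1.5(h): given `N_G(H) = H·(N_G(T)∩N_G(H))`, the map on conjugacy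
classes induced by `(N_G(T)∩N_G(H))/(N_G(T)∩H) → N_G(H)/H` is a bijection. -/
theorem conjClasses_induced_bijective {G : Type*} [Group G] (T H : Subgroup G)
    (hdec : ∀ y ∈ Subgroup.normalizer (H : Set G), ∃ h ∈ H, ∃ n ∈ Subgroup.normalizer (T : Set G) ⊓ Subgroup.normalizer (H : Set G), y = h * n)
    [hnorm : ((Subgroup.normalizer (T : Set G) ⊓ H).subgroupOf (Subgroup.normalizer (T : Set G) ⊓ Subgroup.normalizer (H : Set G))).Normal] :
    Function.Bijective
      (ConjClasses.map
        (QuotientGroup.map ((Subgroup.normalizer (T : Set G) ⊓ H).subgroupOf (Subgroup.normalizer (T : Set G) ⊓ Subgroup.normalizer (H : Set G)))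
          (H.subgroupOf (Subgroup.normalizer (H : Set G)))
          (Subgroup.inclusion inf_le_right)
          (by
            intro x hx
            simp only [Subgroup.mem_subgroupOf, Subgroup.mem_comap] at hx ⊢
            exact hx.2))) := by
  refine ConjClasses.map_bijective ⟨QuotientGroup.map_injective_of_comap_le _ ?_,
    QuotientGroup.map_surjective_of_forall_eq_mul _ ?_⟩
  · intro x hx
    exact ⟨x.2.1, hx⟩
  · intro y
    obtain ⟨h, hh, n, hn, hy⟩ := hdec y y.2
    exact ⟨⟨h, H.le_normalizer hh⟩, hh, ⟨n, hn⟩, Subtype.ext hy⟩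
end

section
/- Let G be a group with an endomorphism F whose Lang map y ↦ y⁻¹F(y) is surjective, let H ≤ G with F(H) = H, and let Y be the G-conjugation orbit of H. Define τ : N_G(H) → (Y^F / G^F-conjugacy) by y ↦ (class of xHx⁻¹) where x⁻¹F(x) = y. Then τ is well-defined (independent of the choice of x with x⁻¹F(x) = y) and surjective onto the set of G^F-conjugacy classes of F-stable members of Y. -/
/-!
`F(xHx⁻¹) = x · (x⁻¹F(x)) H (x⁻¹F(x))⁻¹ · x⁻¹`, so a conjugate `xHx⁻¹` of the `F`-stable
subgroup `H` is `F`-stable exactly when `x⁻¹F(x)` normalises `H`; this gives both that `τ` lands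
in `Y^F` and that every `F`-stable `aHa⁻¹` is `τ(a⁻¹F(a))`. Two solutions `x, x'` of
`x⁻¹F(x) = y` differ by the `F`-fixed element `x'x⁻¹`, which conjugates `xHx⁻¹` to `x'Hx'⁻¹`.
-/

/-- The conjugate subgroup `g K g⁻¹`. -/
def conjSub {G : Type*} [Group G] (g : G) (K : Subgroup G) : Subgroup G :=
  Subgroup.map (MulAut.conj g).toMonoidHom K

open scoped Pointwise

section Conjugation

variable {G : Type*} [Group G]

theorem conjSub_eq_toConjAct_smul (g : G) (K : Subgroup G) :
    conjSub g K = ConjAct.toConjAct g • K :=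
  rfl

theorem conjSub_conjSub (a b : G) (K : Subgroup G) :
    conjSub a (conjSub b K) = conjSub (a * b) K := by
  simp only [conjSub_eq_toConjAct_smul, map_mul, mul_smul]

theorem map_conjSub (F : G →* G) (x : G) (K : Subgroup G) :
    Subgroup.map F (conjSub x K) = conjSub (F x) (Subgroup.map F K) := by
  simp only [conjSub, Subgroup.map_map]
  congr 1
  ext k
  simp

theorem map_conjSub_eq_self_iff {F : G →* G} {H : Subgroup G} (hFH : Subgroup.map F H = H)
    (x : G) :
    Subgroup.map F (conjSub x H) = conjSub x H ↔ x⁻¹ * F x ∈ Subgroup.normalizer (H : Set G) := by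
  have hF : conjSub (F x) H = conjSub x (conjSub (x⁻¹ * F x) H) := by
    rw [conjSub_conjSub, mul_inv_cancel_left]
  rw [map_conjSub, hFH, hF, conjSub_eq_toConjAct_smul x, conjSub_eq_toConjAct_smul x,
    smul_left_cancel_iff, conjSub_eq_toConjAct_smul, Subgroup.conjAct_pointwise_smul_iff]

theorem map_mul_inv_eq_of_inv_mul_map_eq {F : G →* G} {x x' : G}
    (h : x'⁻¹ * F x' = x⁻¹ * F x) : F (x' * x⁻¹) = x' * x⁻¹ := by
  have hFx' : F x' = x' * x⁻¹ * F x := by rw [mul_assoc, ← h, mul_inv_cancel_left]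
  rw [map_mul, map_inv, hFx', mul_inv_cancel_right]

end Conjugation

theorem tau_well_defined_and_surjective_general {G : Type*} [Group G] (F : G →* G)
    (H : Subgroup G) (hFH : Subgroup.map F H = H) :
    (∀ y ∈ Subgroup.normalizer (H : Set G), ∀ x x' : G, x⁻¹ * F x = y → x'⁻¹ * F x' = y →
      Subgroup.map F (conjSub x H) = conjSub x H ∧
        ∃ g : G, F g = g ∧ conjSub x' H = conjSub g (conjSub x H)) ∧
    ∀ H' : Subgroup G, (∃ g : G, H' = conjSub g H) → Subgroup.map F H' = H' →
      ∃ y ∈ Subgroup.normalizer (H : Set G), ∃ x : G, x⁻¹ * F x = y ∧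
        ∃ g : G, F g = g ∧ H' = conjSub g (conjSub x H) := by
  constructor
  · rintro y hy x x' rfl hx'
    refine ⟨(map_conjSub_eq_self_iff hFH x).2 hy, x' * x⁻¹,
      map_mul_inv_eq_of_inv_mul_map_eq hx', ?_⟩
    rw [conjSub_conjSub, inv_mul_cancel_right]
  · rintro H' ⟨a, rfl⟩ hstable
    refine ⟨a⁻¹ * F a, (map_conjSub_eq_self_iff hFH a).1 hstable, a, rfl, 1, map_one F, ?_⟩
    rw [conjSub_conjSub, one_mul]

/-- paper 1.4/1.5: the map `τ : N_G(H) → Y^F/∼`, `y ↦ [xHx⁻¹]` where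
`x⁻¹F(x) = y`, is well defined (lands in F-stable members of `Y`, independently of the
choice of `x` up to `G^F`-conjugacy) and surjective. -/
theorem tau_well_defined_and_surjective {G : Type*} [Group G] (F : G →* G)
    (hLang : Function.Surjective fun y : G => y⁻¹ * F y)
    (H : Subgroup G) (hFH : Subgroup.map F H = H) :
    (∀ y ∈ Subgroup.normalizer (H : Set G), ∀ x x' : G, x⁻¹ * F x = y → x'⁻¹ * F x' = y →
      Subgroup.map F (conjSub x H) = conjSub x H ∧
        ∃ g : G, F g = g ∧ conjSub x' H = conjSub g (conjSub x H)) ∧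
    ∀ H' : Subgroup G, (∃ g : G, H' = conjSub g H) → Subgroup.map F H' = H' →
      ∃ y ∈ Subgroup.normalizer (H : Set G), ∃ x : G, x⁻¹ * F x = y ∧
        ∃ g : G, F g = g ∧ H' = conjSub g (conjSub x H) :=
  tau_well_defined_and_surjective_general F H hFH
end
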